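/- arXiv:1211.4451 — 7 statements merged into one kernel-verified Lean document; each statement's English description precedes it below -/
import Mathlib

section
/- Let (Ḡ, j, p) be a central extension of a group G by ℝ and let s : G → Ḡ be a section of p with s(1) = 1, with defect c : G × G → ℝ and associated cochain Φ : Ḡ → ℝ. Assume c is bounded. Then: (1) for every ḡ ∈ Ḡ the limit φ(ḡ) := lim_{n→∞} Φ(ḡⁿ)/n exists; (2) φ(ḡ·j(t)) = φ(ḡ) + t for all ḡ ∈ Ḡ and t ∈ ℝ, in particular φ(j(t)) = t; (3) the function φ − Φ is bounded on Ḡ and is j(ℝ)-invariant, i.e. (φ − Φ)(j(t)·ḡ) = (φ − Φ)(ḡ) for all t ∈ ℝ and ḡ ∈ Ḡ. -/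
/-!
The cochain `Φ` satisfies `Φ (x * y) = Φ x + Φ y + c (p x) (p y)`, so a bound `k` on the defect
makes `Φ` a quasimorphism. For a quasimorphism `f`, the sequence `n ↦ f (xⁿ) + k` is subadditive,
so Fekete's lemma gives the limit of `f (xⁿ) / n`, and `|f (xⁿ) - n f x| ≤ n k` bounds its distance
to `f`. The limit is additive on commuting pairs, and `Φ (j t ^ n) = n t`; since `j t` is central,
`φ (x * j t) = φ x + φ (j t) = φ x + t`.
-/

open Filter Topology

section Quasimorphism

variable {M : Type*} [Monoid M] {f : M → ℝ} {k : ℝ}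

/-- `limUnder` takes a junk value when the limit does not exist; for quasimorphisms it does
(`tendsto_homogenization`). -/
noncomputable def homogenization (f : M → ℝ) (x : M) : ℝ :=
  limUnder atTop fun n : ℕ => f (x ^ n) / n

theorem abs_apply_pow_succ_sub_le (hf : ∀ x y, |f (x * y) - f x - f y| ≤ k) (x : M) (n : ℕ) :
    |f (x ^ (n + 1)) - (n + 1) * f x| ≤ n * k := by
  induction n with
  | zero => simp
  | succ n ih =>
    have hstep := hf (x ^ (n + 1)) x
    rw [← pow_succ] at hstep
    push_cast
    calc |f (x ^ (n + 1 + 1)) - (n + 1 + 1) * f x|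
        = |(f (x ^ (n + 1 + 1)) - f (x ^ (n + 1)) - f x) + (f (x ^ (n + 1)) - (n + 1) * f x)| := by
          ring_nf
      _ ≤ k + n * k := (abs_add_le _ _).trans (add_le_add hstep ih)
      _ = (n + 1) * k := by ring

theorem tendsto_homogenization (hf : ∀ x y, |f (x * y) - f x - f y| ≤ k) (x : M) :
    Tendsto (fun n : ℕ => f (x ^ n) / n) atTop (𝓝 (homogenization f x)) := by
  have hk : 0 ≤ k := (abs_nonneg _).trans (hf 1 1)
  set u : ℕ → ℝ := fun n => f (x ^ n) + k
  have hu : Subadditive u := fun m n => by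
    have := (abs_le.mp (hf (x ^ m) (x ^ n))).2
    simp only [u, pow_add]
    linarith
  have hbdd : BddBelow (Set.range fun n => u n / n) := by
    refine ⟨min 0 (f x - k), ?_⟩
    rintro _ ⟨_ | n, rfl⟩
    · simp
    · have := (abs_le.mp (abs_apply_pow_succ_sub_le hf x n)).1
      refine (min_le_right _ _).trans ((le_div_iff₀ (by positivity)).2 ?_)
      push_cast
      simp only [u]
      nlinarith
  have hlim := (hu.tendsto_lim hbdd).sub (tendsto_const_div_atTop_nhds_zero_nat k)
  rw [sub_zero] at hlim
  exact tendsto_nhds_limUnder ⟨_, hlim.congr fun n => by simp [u, add_div]⟩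

theorem abs_homogenization_sub_le (hf : ∀ x y, |f (x * y) - f x - f y| ≤ k) (x : M) :
    |homogenization f x - f x| ≤ k := by
  have hk : 0 ≤ k := (abs_nonneg _).trans (hf 1 1)
  refine le_of_tendsto ((tendsto_homogenization hf x).sub_const (f x)).abs ?_
  filter_upwards [eventually_ne_atTop 0] with n hn
  obtain ⟨n, rfl⟩ := Nat.exists_eq_succ_of_ne_zero hn
  have hn : (0 : ℝ) < n + 1 := by positivity
  rw [Nat.cast_succ, div_sub' hn.ne', abs_div, abs_of_pos hn, div_le_iff₀ hn]
  linarith [abs_apply_pow_succ_sub_le hf x n]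

theorem homogenization_mul_of_commute (hf : ∀ x y, |f (x * y) - f x - f y| ≤ k) {x y : M}
    (hxy : Commute x y) :
    homogenization f (x * y) = homogenization f x + homogenization f y := by
  have hdefect :
      Tendsto (fun n : ℕ => (f ((x * y) ^ n) - f (x ^ n) - f (y ^ n)) / n) atTop (𝓝 0) := by
    refine squeeze_zero_norm (fun n => ?_) (tendsto_const_div_atTop_nhds_zero_nat k)
    rw [Real.norm_eq_abs, abs_div, Nat.abs_cast, hxy.mul_pow]
    exact div_le_div_of_nonneg_right (hf _ _) n.cast_nonneg
  have hsum := ((tendsto_homogenization hf x).add (tendsto_homogenization hf y)).add hdefect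
  rw [add_zero] at hsum
  exact tendsto_nhds_unique (tendsto_homogenization hf (x * y)) (hsum.congr fun n => by ring)

theorem homogenization_eq_of_apply_pow {x : M} {a : ℝ} (h : ∀ n : ℕ, f (x ^ n) = n * a) :
    homogenization f x = a := by
  refine Tendsto.limUnder_eq (tendsto_const_nhds.congr' ?_)
  filter_upwards [eventually_ne_atTop 0] with n hn
  rw [h, mul_div_cancel_left₀ _ (Nat.cast_ne_zero.2 hn)]

end Quasimorphism

section CentralExtension

variable {G Gb : Type*} [Group G] [Group Gb] {j : ℝ → Gb} {p : Gb →* G} {s : G → Gb}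
  {Φ : Gb → ℝ}

theorem cochain_one (hj_hom : ∀ t u : ℝ, j (t + u) = j t * j u) (hj_inj : Function.Injective j)
    (hs1 : s 1 = 1) (hΦ : ∀ x : Gb, x = s (p x) * j (Φ x)) :
    Φ 1 = 0 := by
  apply hj_inj
  have hj0 : j 0 = 1 := left_eq_mul.mp (by rw [← hj_hom, add_zero] : j 0 = j 0 * j 0)
  have h1 := hΦ 1
  rw [map_one, hs1, one_mul] at h1
  rw [← h1, hj0]

theorem cochain_mul_j (hj_hom : ∀ t u : ℝ, j (t + u) = j t * j u) (hj_inj : Function.Injective j)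
    (hpj : ∀ t : ℝ, p (j t) = 1) (hΦ : ∀ x : Gb, x = s (p x) * j (Φ x)) (x : Gb) (t : ℝ) :
    Φ (x * j t) = Φ x + t := by
  apply hj_inj
  apply mul_left_cancel (a := s (p x))
  have hp : p (x * j t) = p x := by rw [map_mul, hpj, mul_one]
  calc s (p x) * j (Φ (x * j t)) = x * j t := by rw [← hp, ← hΦ]
    _ = s (p x) * j (Φ x + t) := by rw [hj_hom, ← mul_assoc, ← hΦ]

theorem cochain_j_pow (hj_hom : ∀ t u : ℝ, j (t + u) = j t * j u) (hj_inj : Function.Injective j)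
    (hpj : ∀ t : ℝ, p (j t) = 1) (hs1 : s 1 = 1) (hΦ : ∀ x : Gb, x = s (p x) * j (Φ x))
    (t : ℝ) (n : ℕ) :
    Φ (j t ^ n) = n * t := by
  induction n with
  | zero => simp [cochain_one hj_hom hj_inj hs1 hΦ]
  | succ n ih =>
    rw [pow_succ, cochain_mul_j hj_hom hj_inj hpj hΦ, ih]
    push_cast
    ring

theorem cochain_mul (hj_hom : ∀ t u : ℝ, j (t + u) = j t * j u) (hj_inj : Function.Injective j)
    (hj_cent : ∀ t : ℝ, j t ∈ Subgroup.center Gb) {c : G → G → ℝ}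
    (hc : ∀ g h : G, j (c g h) = s g * s h * (s (g * h))⁻¹)
    (hΦ : ∀ x : Gb, x = s (p x) * j (Φ x)) (x y : Gb) :
    Φ (x * y) = Φ x + Φ y + c (p x) (p y) := by
  have hcomm (t : ℝ) (z : Gb) : j t * z = z * j t :=
    (Subgroup.mem_center_iff.mp (hj_cent t) z).symm
  have hs_mul : s (p x) * s (p y) = j (c (p x) (p y)) * s (p (x * y)) := by
    rw [hc, map_mul, inv_mul_cancel_right]
  apply hj_inj
  apply mul_left_cancel (a := s (p (x * y)))
  calc s (p (x * y)) * j (Φ (x * y)) = x * y := (hΦ _).symm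
    _ = s (p x) * j (Φ x) * (s (p y) * j (Φ y)) := by rw [← hΦ, ← hΦ]
    _ = s (p x) * s (p y) * (j (Φ x) * j (Φ y)) := by
      rw [mul_assoc, ← mul_assoc (j _), hcomm]
      group
    _ = s (p (x * y)) * j (Φ x + Φ y + c (p x) (p y)) := by
      rw [hs_mul, hcomm, add_comm, hj_hom, hj_hom, mul_assoc]

end CentralExtension

theorem stmt_1_general {G Gb : Type*} [Group G] [Group Gb]
    (j : ℝ → Gb) (p : Gb →* G)
    (hj_hom : ∀ t u : ℝ, j (t + u) = j t * j u)
    (hj_inj : Function.Injective j)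
    (hj_cent : ∀ t : ℝ, j t ∈ Subgroup.center Gb)
    (hker : ∀ x : Gb, p x = 1 ↔ ∃ t : ℝ, j t = x)
    (s : G → Gb) (hs1 : s 1 = 1)
    (c : G → G → ℝ) (hc : ∀ g h : G, j (c g h) = s g * s h * (s (g * h))⁻¹)
    (hc_bdd : ∃ k : ℝ, ∀ g h : G, |c g h| ≤ k)
    (Φ : Gb → ℝ) (hΦ : ∀ x : Gb, x = s (p x) * j (Φ x)) :
    ∃ φ : Gb → ℝ,
      (∀ x : Gb, Filter.Tendsto (fun n : ℕ => Φ (x ^ n) / n) Filter.atTop (nhds (φ x))) ∧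
      (∀ (x : Gb) (t : ℝ), φ (x * j t) = φ x + t) ∧
      (∀ t : ℝ, φ (j t) = t) ∧
      (∃ k : ℝ, ∀ x : Gb, |φ x - Φ x| ≤ k) ∧
      (∀ (t : ℝ) (x : Gb), φ (j t * x) - Φ (j t * x) = φ x - Φ x) := by
  obtain ⟨k, hk⟩ := hc_bdd
  have hpj (t : ℝ) : p (j t) = 1 := (hker (j t)).mpr ⟨t, rfl⟩
  have hquasi (x y : Gb) : |Φ (x * y) - Φ x - Φ y| ≤ k := by
    convert hk (p x) (p y) using 2
    rw [cochain_mul hj_hom hj_inj hj_cent hc hΦ]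
    ring
  have hφj (t : ℝ) : homogenization Φ (j t) = t :=
    homogenization_eq_of_apply_pow (cochain_j_pow hj_hom hj_inj hpj hs1 hΦ t)
  have hφmul (x : Gb) (t : ℝ) : homogenization Φ (x * j t) = homogenization Φ x + t := by
    rw [homogenization_mul_of_commute hquasi (Subgroup.mem_center_iff.mp (hj_cent t) x), hφj]
  refine ⟨homogenization Φ, tendsto_homogenization hquasi, hφmul, hφj,
    ⟨k, abs_homogenization_sub_le hquasi⟩, fun t x => ?_⟩
  rw [← Subgroup.mem_center_iff.mp (hj_cent t) x, hφmul, cochain_mul_j hj_hom hj_inj hpj hΦ]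
  ring

/-- if the defect `c` of the section is bounded, the homogenization
`φ(ḡ) = lim Φ(ḡⁿ)/n` of the associated cochain `Φ` exists, satisfies
`φ(ḡ·j t) = φ(ḡ) + t`, and `φ − Φ` is bounded and `j(ℝ)`-invariant. -/
theorem stmt_1 {G Gb : Type*} [Group G] [Group Gb]
    (j : ℝ → Gb) (p : Gb →* G)
    (hj_hom : ∀ t u : ℝ, j (t + u) = j t * j u)
    (hj_inj : Function.Injective j)
    (hj_cent : ∀ t : ℝ, j t ∈ Subgroup.center Gb)
    (hp_surj : Function.Surjective p)
    (hker : ∀ x : Gb, p x = 1 ↔ ∃ t : ℝ, j t = x)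
    (s : G → Gb) (hs : ∀ g : G, p (s g) = g) (hs1 : s 1 = 1)
    (c : G → G → ℝ) (hc : ∀ g h : G, j (c g h) = s g * s h * (s (g * h))⁻¹)
    (hc_bdd : ∃ k : ℝ, ∀ g h : G, |c g h| ≤ k)
    (Φ : Gb → ℝ) (hΦ : ∀ x : Gb, x = s (p x) * j (Φ x)) :
    ∃ φ : Gb → ℝ,
      (∀ x : Gb, Filter.Tendsto (fun n : ℕ => Φ (x ^ n) / n) Filter.atTop (nhds (φ x))) ∧
      (∀ (x : Gb) (t : ℝ), φ (x * j t) = φ x + t) ∧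
      (∀ t : ℝ, φ (j t) = t) ∧
      (∃ k : ℝ, ∀ x : Gb, |φ x - Φ x| ≤ k) ∧
      (∀ (t : ℝ) (x : Gb), φ (j t * x) - Φ (j t * x) = φ x - Φ x) :=
  stmt_1_general j p hj_hom hj_inj hj_cent hker s hs1 c hc hc_bdd Φ hΦ
end

section
/- Let G be a group. For every bounded 2-cocycle c on G there exists a unique bounded 2-cocycle c_x on G such that c_x(gⁿ, gᵐ) = 0 for all g ∈ G and all n, m ∈ ℕ, and such that c − c_x is the coboundary db of some bounded function b : G → ℝ. (c_x is called the homogeneous bounded 2-cocycle representing the bounded cohomology class of c.) -/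
/-- A bounded real 2-cocycle on a group `G` (normalized: vanishing when one argument is 1). -/
def IsBounded2Cocycle {G : Type*} [Group G] (c : G → G → ℝ) : Prop :=
  (∃ k : ℝ, ∀ g h : G, |c g h| ≤ k) ∧
  (∀ g h k : G, c h k - c (g * h) k + c g (h * k) - c g h = 0) ∧
  (∀ g : G, c g 1 = 0) ∧ (∀ g : G, c 1 g = 0)

/-- A homogeneous 2-cocycle: it vanishes on pairs of powers of a single element. -/
def IsHomogeneous2Cocycle {G : Type*} [Group G] (c : G → G → ℝ) : Prop :=
  ∀ (g : G) (n m : ℕ), c (g ^ n) (g ^ m) = 0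

/-!
Along the powers of a fixed `g`, a normalized cocycle is the defect of the partial sums
`a n = ∑ i < n, c (gⁱ, g)`: `c (gⁿ, gᵐ) = a (n + m) - a n - a m`. As `c` is bounded, `a` is a
quasimorphism on `ℕ`, so `b g := lim a n / n` exists, is bounded by the bound of `c`, and
`b (gⁿ) = n b g - a n`. Subtracting `db` therefore kills `c` on pairs of powers. Uniqueness:
the difference of two such cocycles is `dβ` for a bounded `β` that is additive on powers of every
element, and a bounded homomorphism `ℕ → ℝ` vanishes.
-/

open Filter Topology

theorem Real.exists_tendsto_div_of_abs_add_sub_le {f : ℕ → ℝ} {K : ℝ}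
    (hf : ∀ m n, |f (m + n) - f m - f n| ≤ K) :
    ∃ l, Tendsto (fun n : ℕ => f n / n) atTop (𝓝 l) := by
  have hsub : Subadditive (fun n => f n + K) := fun m n => by
    linarith [(abs_le.1 (hf m n)).2]
  have hsub' : Subadditive (fun n => K - f n) := fun m n => by
    linarith [(abs_le.1 (hf m n)).1]
  have hlow (n : ℕ) : n * (f 1 - K) ≤ f n + K := by
    have h := hsub'.apply_mul_add_le n 1 0
    simp only [mul_one, add_zero] at h
    linarith [(abs_le.1 (hf 0 0)).2]
  have hbdd : BddBelow (Set.range fun n : ℕ => (f n + K) / n) := by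
    refine ⟨min 0 (f 1 - K), ?_⟩
    rintro _ ⟨n, rfl⟩
    rcases Nat.eq_zero_or_pos n with rfl | hn
    · simp
    · exact (min_le_right _ _).trans <| (le_div_iff₀ (by exact_mod_cast hn)).2 <| by
        linarith [hlow n]
  have h := (hsub.tendsto_lim hbdd).sub (tendsto_const_div_atTop_nhds_zero_nat K)
  rw [sub_zero] at h
  exact ⟨hsub.lim, h.congr fun n => by ring⟩

theorem Real.eq_zero_of_forall_abs_natCast_mul_le {x K : ℝ} (h : ∀ n : ℕ, |n * x| ≤ K) :
    x = 0 := by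
  by_contra hx
  have hx' : 0 < |x| := abs_pos.2 hx
  obtain ⟨n, hn⟩ := exists_nat_gt (K / |x|)
  have hnx := h n
  rw [abs_mul, Nat.abs_cast] at hnx
  rw [div_lt_iff₀ hx'] at hn
  linarith

namespace BoundedCohomology

variable {G : Type*} [Group G]

def IsCocycle (c : G → G → ℝ) : Prop :=
  ∀ g h k : G, c h k - c (g * h) k + c g (h * k) - c g h = 0

def coboundary (b : G → ℝ) (g h : G) : ℝ := b h - b (g * h) + b g

theorem isBounded2Cocycle_sub_coboundary {c : G → G → ℝ} {b : G → ℝ}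
    (hc : IsBounded2Cocycle c) (hb : ∃ K, ∀ g, |b g| ≤ K) (hb1 : b 1 = 0) :
    IsBounded2Cocycle (c - coboundary b) := by
  obtain ⟨⟨K, hK⟩, hco, h1, h1'⟩ := hc
  obtain ⟨L, hL⟩ := hb
  refine ⟨⟨K + 3 * L, fun g h => ?_⟩, fun g h k => ?_, fun g => ?_, fun g => ?_⟩
  all_goals simp only [Pi.sub_apply, coboundary]
  · calc |c g h - (b h - b (g * h) + b g)| ≤ |c g h| + (|b h| + |b (g * h)| + |b g|) := by
          grw [abs_sub, abs_add_le, abs_sub]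
      _ ≤ K + 3 * L := by linarith [hK g h, hL g, hL h, hL (g * h)]
  · rw [mul_assoc]
    linarith [hco g h k]
  · simp [h1, hb1]
  · simp [h1', hb1]

section CyclicPrimitive

variable {c : G → G → ℝ}

def cyclicPrimitive (c : G → G → ℝ) (g : G) (n : ℕ) : ℝ :=
  ∑ i ∈ Finset.range n, c (g ^ i) g

theorem cyclicPrimitive_add (hc : IsCocycle c) (h1 : ∀ g, c g 1 = 0) (g : G) (n m : ℕ) :
    cyclicPrimitive c g (n + m) =
      cyclicPrimitive c g n + cyclicPrimitive c g m + c (g ^ n) (g ^ m) := by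
  induction m with
  | zero => simp [cyclicPrimitive, h1]
  | succ m ih =>
    have hcgm := hc (g ^ n) (g ^ m) g
    rw [← pow_add, ← pow_succ] at hcgm
    simp only [cyclicPrimitive, ← add_assoc, Finset.sum_range_succ] at ih ⊢
    linarith

theorem cyclicPrimitive_pow (hc : IsCocycle c) (h1 : ∀ g, c g 1 = 0) (g : G) (n k : ℕ) :
    cyclicPrimitive c (g ^ n) k = cyclicPrimitive c g (k * n) - k * cyclicPrimitive c g n := by
  induction k with
  | zero => simp [cyclicPrimitive]
  | succ k ih =>
    rw [cyclicPrimitive, Finset.sum_range_succ, ← cyclicPrimitive, ih, ← pow_mul', add_mul,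
      one_mul, cyclicPrimitive_add hc h1]
    push_cast
    ring

theorem abs_cyclicPrimitive_le {K : ℝ} (hK : ∀ g h, |c g h| ≤ K) (g : G) (n : ℕ) :
    |cyclicPrimitive c g n| ≤ n * K :=
  calc |cyclicPrimitive c g n| ≤ ∑ i ∈ Finset.range n, |c (g ^ i) g| :=
        Finset.abs_sum_le_sum_abs _ _
    _ ≤ n * K := by simpa using Finset.sum_le_card_nsmul (Finset.range n) _ _ fun i _ => hK (g ^ i) g

noncomputable def stablePrimitive (c : G → G → ℝ) (g : G) : ℝ :=
  limUnder atTop fun n : ℕ => cyclicPrimitive c g n / n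

theorem tendsto_stablePrimitive (hc : IsCocycle c) (h1 : ∀ g, c g 1 = 0) {K : ℝ}
    (hK : ∀ g h, |c g h| ≤ K) (g : G) :
    Tendsto (fun n : ℕ => cyclicPrimitive c g n / n) atTop (𝓝 (stablePrimitive c g)) :=
  tendsto_nhds_limUnder <| Real.exists_tendsto_div_of_abs_add_sub_le (K := K) fun m n => by
    convert hK (g ^ m) (g ^ n) using 2
    rw [cyclicPrimitive_add hc h1]
    ring

theorem abs_stablePrimitive_le (hc : IsCocycle c) (h1 : ∀ g, c g 1 = 0) {K : ℝ}
    (hK : ∀ g h, |c g h| ≤ K) (g : G) : |stablePrimitive c g| ≤ K := by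
  have hK0 : 0 ≤ K := (abs_nonneg _).trans (hK 1 1)
  refine le_of_tendsto (tendsto_stablePrimitive hc h1 hK g).abs (.of_forall fun n => ?_)
  rw [abs_div, Nat.abs_cast]
  exact div_le_of_le_mul₀ n.cast_nonneg hK0 <| by
    simpa [mul_comm] using abs_cyclicPrimitive_le hK g n

theorem stablePrimitive_one (h1 : ∀ g, c g 1 = 0) : stablePrimitive c 1 = 0 := by
  simpa [stablePrimitive, cyclicPrimitive, h1] using
    (tendsto_const_nhds (x := (0 : ℝ)) (f := atTop (α := ℕ))).limUnder_eq

theorem stablePrimitive_pow (hc : IsCocycle c) (h1 : ∀ g, c g 1 = 0) {K : ℝ}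
    (hK : ∀ g h, |c g h| ≤ K) (g : G) (n : ℕ) :
    stablePrimitive c (g ^ n) = n * stablePrimitive c g - cyclicPrimitive c g n := by
  rcases Nat.eq_zero_or_pos n with rfl | hn
  · simp [cyclicPrimitive, stablePrimitive_one h1]
  have hkn : Tendsto (fun k : ℕ => k * n) atTop atTop := tendsto_id.atTop_mul_const' hn
  have h := (((tendsto_stablePrimitive hc h1 hK g).comp hkn).const_mul (n : ℝ)).sub_const
    (cyclicPrimitive c g n)
  refine tendsto_nhds_unique (tendsto_stablePrimitive hc h1 hK (g ^ n)) (h.congr' ?_)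
  filter_upwards [eventually_ne_atTop 0] with k hk
  simp only [Function.comp_apply, cyclicPrimitive_pow hc h1]
  push_cast
  field_simp

end CyclicPrimitive

theorem isHomogeneous2Cocycle_sub_coboundary_stablePrimitive {c : G → G → ℝ} (hc : IsCocycle c)
    (h1 : ∀ g, c g 1 = 0) {K : ℝ} (hK : ∀ g h, |c g h| ≤ K) :
    IsHomogeneous2Cocycle (c - coboundary (stablePrimitive c)) := by
  intro g n m
  simp only [Pi.sub_apply, coboundary, ← pow_add, stablePrimitive_pow hc h1 hK,
    cyclicPrimitive_add hc h1]
  push_cast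
  ring

theorem coboundary_sub (b₁ b₂ : G → ℝ) : coboundary (b₁ - b₂) = coboundary b₁ - coboundary b₂ := by
  funext g h
  simp only [coboundary, Pi.sub_apply]
  ring

theorem eq_zero_of_coboundary_pow_eq_zero {β : G → ℝ} (hβ : ∃ K, ∀ g, |β g| ≤ K)
    (hβ_pow : ∀ (g : G) (n m : ℕ), coboundary β (g ^ n) (g ^ m) = 0) : β = 0 := by
  obtain ⟨K, hK⟩ := hβ
  have hβ_add (g : G) (n m : ℕ) : β (g ^ (n + m)) = β (g ^ n) + β (g ^ m) := by
    have := hβ_pow g n m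
    rw [coboundary, ← pow_add] at this
    linarith
  have hβ_nsmul (g : G) (n : ℕ) : β (g ^ n) = n * β g := by
    induction n with
    | zero => simpa using hβ_add 1 0 0
    | succ n ih => rw [hβ_add, ih, pow_one]; push_cast; ring
  funext g
  exact Real.eq_zero_of_forall_abs_natCast_mul_le fun n => hβ_nsmul g n ▸ hK (g ^ n)

theorem eq_of_sub_eq_coboundary {c c₁ c₂ : G → G → ℝ} {b₁ b₂ : G → ℝ}
    (h₁ : IsHomogeneous2Cocycle c₁) (h₂ : IsHomogeneous2Cocycle c₂)
    (hb₁ : ∃ K, ∀ g, |b₁ g| ≤ K) (hb₂ : ∃ K, ∀ g, |b₂ g| ≤ K)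
    (hc₁ : ∀ g h, c g h - c₁ g h = coboundary b₁ g h)
    (hc₂ : ∀ g h, c g h - c₂ g h = coboundary b₂ g h) : c₁ = c₂ := by
  obtain ⟨K₁, hK₁⟩ := hb₁
  obtain ⟨K₂, hK₂⟩ := hb₂
  have hb : b₁ = b₂ := sub_eq_zero.1 <| by
    refine eq_zero_of_coboundary_pow_eq_zero
      ⟨K₁ + K₂, fun g => (abs_sub _ _).trans (add_le_add (hK₁ g) (hK₂ g))⟩ fun g n m => ?_
    rw [coboundary_sub, Pi.sub_apply, Pi.sub_apply, ← hc₁, ← hc₂, h₁, h₂]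
    ring
  subst hb
  funext g h
  linarith [hc₁ g h, hc₂ g h]

end BoundedCohomology

/-- every bounded 2-cocycle is cohomologous, via the coboundary of a bounded
function, to a unique homogeneous bounded 2-cocycle. -/
theorem stmt_4 {G : Type*} [Group G] (c : G → G → ℝ) (hc : IsBounded2Cocycle c) :
    ∃! cx : G → G → ℝ,
      IsBounded2Cocycle cx ∧ IsHomogeneous2Cocycle cx ∧
      ∃ b : G → ℝ, (∃ k : ℝ, ∀ g : G, |b g| ≤ k) ∧
        ∀ g h : G, c g h - cx g h = b h - b (g * h) + b g := by
  open BoundedCohomology in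
  obtain ⟨⟨K, hK⟩, hco, h1, -⟩ := id hc
  have hb : ∃ k, ∀ g, |stablePrimitive c g| ≤ k := ⟨K, abs_stablePrimitive_le hco h1 hK⟩
  have hhom := isHomogeneous2Cocycle_sub_coboundary_stablePrimitive hco h1 hK
  refine ⟨c - coboundary (stablePrimitive c),
    ⟨isBounded2Cocycle_sub_coboundary hc hb (stablePrimitive_one h1), hhom,
      stablePrimitive c, hb, fun g h => sub_sub_cancel _ _⟩, ?_⟩
  rintro cx ⟨-, hcx, b, hb', hcb⟩
  exact eq_of_sub_eq_coboundary hcx hhom hb' hb hcb fun g h => sub_sub_cancel _ _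
end

section
/- Let G be a group and let c be a homogeneous bounded 2-cocycle on G. If c = db for some bounded function b : G → ℝ (i.e. the bounded cohomology class of c vanishes), then c = 0 identically. -/
/-! If `c = db` is homogeneous, then `b` is additive along the powers of every element, so
`b (g ^ n) = n * b g`; a bounded function with this property vanishes, and hence so does `c`. -/

theorem map_pow_eq_nsmul_of_map_pow_add {G M : Type*} [Monoid G] [AddCancelMonoid M]
    (f : G → M) (hf : ∀ (g : G) (n m : ℕ), f (g ^ n * g ^ m) = f (g ^ n) + f (g ^ m))
    (g : G) (n : ℕ) : f (g ^ n) = n • f g := by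
  have hf_one : f 1 = 0 := by
    simpa using hf g 0 0
  induction n with
  | zero => simpa using hf_one
  | succ n ih => simpa [pow_succ, ih, succ_nsmul] using hf g n 1

theorem eq_zero_of_bounded_of_map_pow {G : Type*} [Monoid G] (f : G → ℝ)
    (hf_bdd : ∃ k : ℝ, ∀ g : G, |f g| ≤ k) (hf : ∀ (g : G) (n : ℕ), f (g ^ n) = n * f g)
    (g : G) : f g = 0 := by
  obtain ⟨k, hk⟩ := hf_bdd
  by_contra hg
  have hpos : 0 < |f g| := abs_pos.mpr hg
  obtain ⟨n, hn⟩ := exists_nat_gt (k / |f g|)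
  have hbound : (n : ℝ) * |f g| ≤ k := by
    simpa [hf, abs_mul] using hk (g ^ n)
  rw [div_lt_iff₀ hpos] at hn
  linarith

theorem stmt_5_general {G : Type*} [Group G] (c : G → G → ℝ)
    (hhom : IsHomogeneous2Cocycle c)
    (b : G → ℝ) (hb_bdd : ∃ k : ℝ, ∀ g : G, |b g| ≤ k)
    (hcb : ∀ g h : G, c g h = b h - b (g * h) + b g) :
    ∀ g h : G, c g h = 0 := by
  have hb_pow_add : ∀ (g : G) (n m : ℕ), b (g ^ n * g ^ m) = b (g ^ n) + b (g ^ m) := by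
    intro g n m
    linarith [hcb (g ^ n) (g ^ m), hhom g n m]
  have hb_pow (g : G) (n : ℕ) : b (g ^ n) = n * b g := by
    rw [map_pow_eq_nsmul_of_map_pow_add b hb_pow_add, nsmul_eq_mul]
  have hb_zero := eq_zero_of_bounded_of_map_pow b hb_bdd hb_pow
  intro g h
  simp [hcb, hb_zero]

/-- a homogeneous bounded 2-cocycle which is the coboundary of a bounded
function vanishes identically. -/
theorem stmt_5 {G : Type*} [Group G] (c : G → G → ℝ)
    (hc : IsBounded2Cocycle c) (hhom : IsHomogeneous2Cocycle c)
    (b : G → ℝ) (hb_bdd : ∃ k : ℝ, ∀ g : G, |b g| ≤ k)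
    (hcb : ∀ g h : G, c g h = b h - b (g * h) + b g) :
    ∀ g h : G, c g h = 0 :=
  stmt_5_general c hhom b hb_bdd hcb
end

section
/- Let G be a group. (1) If c' is a bounded 2-cocycle on G, α is an automorphism of G, and c'_x is the homogeneous bounded 2-cocycle representing c' (the unique homogeneous bounded 2-cocycle with c' − c'_x a coboundary of a bounded function), then c'_x ∘ (α × α) is the homogeneous bounded 2-cocycle representing c' ∘ (α × α). (2) In particular every homogeneous bounded 2-cocycle c on G is invariant under conjugation: c(g₀ g g₀⁻¹, g₀ h g₀⁻¹) = c(g, h) for all g₀, g, h ∈ G. -/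
section Pullback

variable {G H : Type*} [Group G] [Group H]

lemma IsBounded2Cocycle.comp_monoidHom {c : H → H → ℝ} (hc : IsBounded2Cocycle c)
    (f : G →* H) : IsBounded2Cocycle fun g h => c (f g) (f h) := by
  obtain ⟨⟨k, hk⟩, hco, hc1, h1c⟩ := hc
  refine ⟨⟨k, fun g h => hk _ _⟩, fun g h j => ?_, fun g => ?_, fun g => ?_⟩
  · simpa only [map_mul] using hco (f g) (f h) (f j)
  · simpa only [map_one] using hc1 (f g)
  · simpa only [map_one] using h1c (f g)

lemma IsHomogeneous2Cocycle.comp_monoidHom {c : H → H → ℝ} (hc : IsHomogeneous2Cocycle c)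
    (f : G →* H) : IsHomogeneous2Cocycle fun g h => c (f g) (f h) := by
  intro g n m
  simpa only [map_pow] using hc (f g) n m

end Pullback

lemma eq_zero_of_abs_le_of_map_pow {M : Type*} [Monoid M] {b : M → ℝ} {k : ℝ}
    (hk : ∀ g, |b g| ≤ k) (hpow : ∀ (g : M) (n : ℕ), b (g ^ n) = n * b g) (g : M) :
    b g = 0 := by
  by_contra hne
  obtain ⟨n, hn⟩ := exists_nat_gt (k / |b g|)
  rw [div_lt_iff₀ (abs_pos.2 hne)] at hn
  have hbound := hk (g ^ n)
  rw [hpow, abs_mul, Nat.abs_cast] at hbound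
  linarith

section Conjugation

variable {G : Type*} [Group G]

lemma IsHomogeneous2Cocycle.eq_of_sub_eq_coboundary {c₁ c₂ : G → G → ℝ}
    (hc₁ : IsHomogeneous2Cocycle c₁) (hc₂ : IsHomogeneous2Cocycle c₂) {b : G → ℝ} {k : ℝ}
    (hk : ∀ g, |b g| ≤ k) (hb : ∀ g h, c₁ g h - c₂ g h = b h - b (g * h) + b g) :
    c₁ = c₂ := by
  have hb1 : b 1 = 0 := by
    have h11 := hb 1 1
    rw [mul_one, ← pow_zero (1 : G), hc₁, hc₂, pow_zero] at h11
    linarith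
  have hpow : ∀ (g : G) (n : ℕ), b (g ^ n) = n * b g := by
    intro g n
    induction n with
    | zero => simpa using hb1
    | succ n ih =>
      have hstep := hb (g ^ n) g
      rw [← pow_succ, ← pow_one g, ← pow_mul, one_mul, hc₁, hc₂, pow_one] at hstep
      push_cast
      linarith
  have hb0 := eq_zero_of_abs_le_of_map_pow hk hpow
  funext g h
  linarith [hb g h, hb0 h, hb0 (g * h), hb0 g]

lemma conj_sub_eq_coboundary {c : G → G → ℝ}
    (hco : ∀ g h k : G, c h k - c (g * h) k + c g (h * k) - c g h = 0) (t g h : G) :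
    c (t * g * t⁻¹) (t * h * t⁻¹) - c g h =
      (c (t * h * t⁻¹) t - c t h) - (c (t * (g * h) * t⁻¹) t - c t (g * h))
        + (c (t * g * t⁻¹) t - c t g) := by
  have E1 := hco (t * g * t⁻¹) t h
  have E2 := hco (t * g * t⁻¹) (t * h * t⁻¹) t
  have E3 := hco t g h
  rw [show t * g * t⁻¹ * t = t * g by group] at E1
  rw [show t * g * t⁻¹ * (t * h * t⁻¹) = t * (g * h) * t⁻¹ by group,
    show t * h * t⁻¹ * t = t * h by group] at E2
  linarith

lemma IsHomogeneous2Cocycle.conj_eq {c : G → G → ℝ} (hc : IsBounded2Cocycle c)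
    (hhom : IsHomogeneous2Cocycle c) (t g h : G) :
    c (t * g * t⁻¹) (t * h * t⁻¹) = c g h := by
  obtain ⟨⟨k, hk⟩, hco, -⟩ := hc
  have hconj := (hhom.comp_monoidHom (MulAut.conj t).toMonoidHom).eq_of_sub_eq_coboundary hhom
    (b := fun x => c (t * x * t⁻¹) t - c t x) (k := k + k)
    (fun x => (abs_sub _ _).trans (add_le_add (hk _ _) (hk _ _)))
    (conj_sub_eq_coboundary hco t)
  simpa using congrFun₂ hconj g h

end Conjugation

/-- (1) pulling back the homogeneous representative of a bounded 2-cocycle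
along an automorphism gives the homogeneous representative of the pullback; (2) in
particular homogeneous bounded 2-cocycles are conjugation-invariant. -/
theorem stmt_6 {G : Type*} [Group G] :
    (∀ (c' : G → G → ℝ) (α : G ≃* G) (c'x : G → G → ℝ),
      IsBounded2Cocycle c' →
      IsBounded2Cocycle c'x → IsHomogeneous2Cocycle c'x →
      (∃ b : G → ℝ, (∃ k : ℝ, ∀ g : G, |b g| ≤ k) ∧
        ∀ g h : G, c' g h - c'x g h = b h - b (g * h) + b g) →
      (IsBounded2Cocycle (fun g h => c'x (α g) (α h)) ∧
        IsHomogeneous2Cocycle (fun g h => c'x (α g) (α h)) ∧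
        ∃ b : G → ℝ, (∃ k : ℝ, ∀ g : G, |b g| ≤ k) ∧
          ∀ g h : G, c' (α g) (α h) - c'x (α g) (α h) = b h - b (g * h) + b g)) ∧
    (∀ c : G → G → ℝ, IsBounded2Cocycle c → IsHomogeneous2Cocycle c →
      ∀ g₀ g h : G, c (g₀ * g * g₀⁻¹) (g₀ * h * g₀⁻¹) = c g h) := by
  refine ⟨?_, fun c hc hhom => hhom.conj_eq hc⟩
  rintro c' α c'x - hc'x hhom ⟨b, ⟨k, hk⟩, hb⟩
  refine ⟨hc'x.comp_monoidHom α.toMonoidHom, hhom.comp_monoidHom α.toMonoidHom,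
    b ∘ α, ⟨k, fun g => hk (α g)⟩, fun g h => ?_⟩
  simpa only [Function.comp_apply, map_mul] using hb (α g) (α h)
end

section
/- Let G be a group. (1) For every g ∈ G and every bounded function b : G → ℝ, Σ_{(u,v)∈G×G} m(g)(u,v)·(b(v) − b(uv) + b(u)) = b(g); moreover ‖m(g)‖₁ = 1. (2) Consequently, for every z ∈ ℓ¹(G) (the Banach space of absolutely summable real families on G) there exists w ∈ ℓ¹(G×G) with ‖w‖₁ ≤ ‖z‖₁ such that Σ_{g∈G} z(g)·b(g) = Σ_{(u,v)∈G×G} w(u,v)·(b(v) − b(uv) + b(u)) for every bounded function b : G → ℝ. (This expresses the vanishing of the first ℓ¹-homology H₁^{ℓ¹}(G, ℝ) = 0.) -/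
noncomputable section

open scoped ENNReal

instance : Fact ((1 : ℝ≥0∞) ≤ 1) := ⟨le_rfl⟩

/-- Dirac element of `ℓ¹(G×G)`. -/
def dirac {G : Type*} [Group G] (x : G × G) : lp (fun _ : G × G => ℝ) 1 :=
  letI := Classical.decEq (G × G)
  lp.single 1 x 1

/-- `m(g) = Σ_{n≥1} 2⁻ⁿ · δ_{(g^{2^{n-1}}, g^{2^{n-1}})} ∈ ℓ¹(G×G)`. -/
def mm {G : Type*} [Group G] (g : G) : lp (fun _ : G × G => ℝ) 1 :=
  ∑' n : ℕ, ((1 : ℝ) / 2) ^ (n + 1) • dirac (g ^ 2 ^ n, g ^ 2 ^ n)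

/-!
Pairing with a bounded function is a continuous linear functional on `ℓ¹`, so it may be
exchanged with the series defining `m(g)`. Against a coboundary `db` the `n`-th term of that
series is `2⁻ⁿ b(g^{2^n}) - 2⁻ⁿ⁻¹ b(g^{2^{n+1}})`, and the sum telescopes to `b g` because
`b` is bounded. As `‖m(g)‖₁ = 1`, the element `w = Σ_g z(g) m(g)` converges absolutely in
`ℓ¹(G×G)` with `‖w‖₁ ≤ ‖z‖₁` and pairs with `db` exactly as `z` pairs with `b`.
-/

section Pairing

variable {α : Type*}

lemma hasSum_abs_of_lp_one (f : lp (fun _ : α => ℝ) 1) : HasSum (fun x => |f x|) ‖f‖ := by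
  simpa [Real.rpow_one, Real.norm_eq_abs] using lp.hasSum_norm (p := 1) (by norm_num) f

variable {c : α → ℝ} {k : ℝ}

lemma norm_mul_le_abs_mul (hc : ∀ x, |c x| ≤ k) (f : lp (fun _ : α => ℝ) 1) (x : α) :
    ‖f x * c x‖ ≤ |f x| * k := by
  rw [Real.norm_eq_abs, abs_mul]
  exact mul_le_mul_of_nonneg_left (hc x) (abs_nonneg _)

lemma summable_mul_of_abs_le (hc : ∀ x, |c x| ≤ k) (f : lp (fun _ : α => ℝ) 1) :
    Summable fun x => f x * c x :=
  .of_norm_bounded ((hasSum_abs_of_lp_one f).mul_right k).summable (norm_mul_le_abs_mul hc f)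

lemma norm_tsum_mul_le (hc : ∀ x, |c x| ≤ k) (f : lp (fun _ : α => ℝ) 1) :
    ‖∑' x, f x * c x‖ ≤ k * ‖f‖ := by
  rw [mul_comm]
  exact tsum_of_norm_bounded ((hasSum_abs_of_lp_one f).mul_right k) (norm_mul_le_abs_mul hc f)

def pairing (c : α → ℝ) (hc : ∀ x, |c x| ≤ k) : lp (fun _ : α => ℝ) 1 →L[ℝ] ℝ :=
  LinearMap.mkContinuous
    { toFun := fun f => ∑' x, f x * c x
      map_add' := fun f g => by
        simp only [lp.coeFn_add, Pi.add_apply, add_mul]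
        exact (summable_mul_of_abs_le hc f).tsum_add (summable_mul_of_abs_le hc g)
      map_smul' := fun r f => by
        simp only [lp.coeFn_smul, Pi.smul_apply, smul_eq_mul, RingHom.id_apply, mul_assoc]
        exact tsum_mul_left }
    k (norm_tsum_mul_le hc)

lemma pairing_apply (hc : ∀ x, |c x| ≤ k) (f : lp (fun _ : α => ℝ) 1) :
    pairing c hc f = ∑' x, f x * c x :=
  rfl

end Pairing

lemma summable_smul_of_norm_le_one {ι E : Type*} [NormedAddCommGroup E] [NormedSpace ℝ E]
    [CompleteSpace E] (z : lp (fun _ : ι => ℝ) 1) {f : ι → E} (hf : ∀ i, ‖f i‖ ≤ 1) :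
    Summable fun i => z i • f i :=
  .of_norm_bounded (hasSum_abs_of_lp_one z).summable fun i => by
    simpa [norm_smul] using mul_le_mul_of_nonneg_left (hf i) (abs_nonneg (z i))

lemma norm_tsum_smul_le_of_norm_le_one {ι E : Type*} [NormedAddCommGroup E] [NormedSpace ℝ E]
    (z : lp (fun _ : ι => ℝ) 1) {f : ι → E} (hf : ∀ i, ‖f i‖ ≤ 1) :
    ‖∑' i, z i • f i‖ ≤ ‖z‖ :=
  tsum_of_norm_bounded (hasSum_abs_of_lp_one z) fun i => by
    simpa [norm_smul] using mul_le_mul_of_nonneg_left (hf i) (abs_nonneg (z i))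

lemma hasSum_half_pow_succ : HasSum (fun n : ℕ => ((1 : ℝ) / 2) ^ (n + 1)) 1 := by
  convert hasSum_geometric_two' 1 using 2 with n
  rw [pow_succ, div_pow, one_pow]
  ring

section Group

variable {G : Type*} [Group G]

lemma norm_dirac (x : G × G) : ‖dirac x‖ = 1 := by
  simp [dirac]

lemma pairing_dirac {c : G × G → ℝ} {k : ℝ} (hc : ∀ x, |c x| ≤ k) (x : G × G) :
    pairing c hc (dirac x) = c x := by
  classical
  rw [pairing_apply, tsum_eq_single x fun y hy => by simp [dirac, hy]]
  simp [dirac]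

lemma norm_half_pow_smul_dirac (n : ℕ) (x : G × G) :
    ‖((1 : ℝ) / 2) ^ (n + 1) • dirac x‖ = ((1 : ℝ) / 2) ^ (n + 1) := by
  rw [norm_smul, norm_dirac, mul_one, Real.norm_of_nonneg (by positivity)]

lemma summable_half_pow_smul_dirac (g : G) :
    Summable fun n : ℕ => ((1 : ℝ) / 2) ^ (n + 1) • dirac (g ^ 2 ^ n, g ^ 2 ^ n) :=
  .of_norm_bounded hasSum_half_pow_succ.summable fun n => (norm_half_pow_smul_dirac n _).le

lemma pairing_mm {c : G × G → ℝ} {k : ℝ} (hc : ∀ x, |c x| ≤ k) (g : G) :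
    pairing c hc (mm g) = ∑' n : ℕ, ((1 : ℝ) / 2) ^ (n + 1) * c (g ^ 2 ^ n, g ^ 2 ^ n) := by
  rw [mm, (pairing c hc).map_tsum (summable_half_pow_smul_dirac g)]
  simp only [map_smul, pairing_dirac, smul_eq_mul]

lemma norm_mm (g : G) : ‖mm g‖ = 1 := by
  have hle : ‖mm g‖ ≤ 1 :=
    tsum_of_norm_bounded hasSum_half_pow_succ fun n => (norm_half_pow_smul_dirac n _).le
  have hone : ∀ _ : G × G, |(1 : ℝ)| ≤ 1 := fun _ => abs_one.le
  have hpair : pairing (fun _ => 1) hone (mm g) = 1 := by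
    simpa [pairing_mm] using hasSum_half_pow_succ.tsum_eq
  have hge : 1 ≤ ‖mm g‖ := by
    simpa [hpair] using (pairing (fun _ => 1) hone).le_of_opNorm_le
      (LinearMap.mkContinuous_norm_le _ zero_le_one _) (mm g)
  exact hle.antisymm hge

def coboundary (b : G → ℝ) (uv : G × G) : ℝ :=
  b uv.2 - b (uv.1 * uv.2) + b uv.1

lemma abs_coboundary_le {b : G → ℝ} {k : ℝ} (hb : ∀ x, |b x| ≤ k) (uv : G × G) :
    |coboundary b uv| ≤ 3 * k := by
  unfold coboundary
  have := abs_sub (b uv.2) (b (uv.1 * uv.2))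
  have := abs_add_le (b uv.2 - b (uv.1 * uv.2)) (b uv.1)
  linarith [hb uv.1, hb uv.2, hb (uv.1 * uv.2)]

lemma tsum_half_pow_mul_coboundary {b : G → ℝ} {k : ℝ} (hb : ∀ x, |b x| ≤ k) (g : G) :
    ∑' n : ℕ, ((1 : ℝ) / 2) ^ (n + 1) * coboundary b (g ^ 2 ^ n, g ^ 2 ^ n) = b g := by
  set u : ℕ → ℝ := fun n => ((1 : ℝ) / 2) ^ n * b (g ^ 2 ^ n)
  have hu : Summable u := .of_norm_bounded
      (summable_geometric_two.mul_right k) fun n => by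
    rw [Real.norm_eq_abs, abs_mul, abs_of_pos (by positivity)]
    exact mul_le_mul_of_nonneg_left (hb _) (by positivity)
  have hterm : ∀ n : ℕ,
      ((1 : ℝ) / 2) ^ (n + 1) * coboundary b (g ^ 2 ^ n, g ^ 2 ^ n) = u n - u (n + 1) := by
    intro n
    simp only [u, coboundary, ← pow_add, ← two_mul, ← pow_succ']
    ring
  rw [tsum_congr hterm, hu.tsum_sub ((summable_nat_add_iff 1).2 hu), hu.tsum_eq_zero_add]
  simp [u]

lemma pairing_coboundary_mm {b : G → ℝ} {k : ℝ} (hb : ∀ x, |b x| ≤ k) (g : G) :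
    pairing (coboundary b) (abs_coboundary_le hb) (mm g) = b g := by
  rw [pairing_mm, tsum_half_pow_mul_coboundary hb]

end Group

/-- `⟨db, m(g)⟩ = b(g)` for every bounded `b`, `‖m(g)‖₁ = 1`, and consequently
every `z ∈ ℓ¹(G)` pairs with each coboundary `db` through some `w ∈ ℓ¹(G×G)` with
`‖w‖₁ ≤ ‖z‖₁` (the vanishing of `H₁^{ℓ¹}(G,ℝ)`). -/
theorem stmt_8 {G : Type*} [Group G] :
    (∀ g : G,
      (∀ b : G → ℝ, (∃ k : ℝ, ∀ x : G, |b x| ≤ k) →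
        ∑' uv : G × G, mm g uv * (b uv.2 - b (uv.1 * uv.2) + b uv.1) = b g) ∧
      ‖mm g‖ = 1) ∧
    (∀ z : lp (fun _ : G => ℝ) 1,
      ∃ w : lp (fun _ : G × G => ℝ) 1, ‖w‖ ≤ ‖z‖ ∧
        ∀ b : G → ℝ, (∃ k : ℝ, ∀ x : G, |b x| ≤ k) →
          ∑' g : G, z g * b g =
            ∑' uv : G × G, w uv * (b uv.2 - b (uv.1 * uv.2) + b uv.1)) := by
  refine ⟨fun g => ⟨fun b ⟨k, hb⟩ => pairing_coboundary_mm hb g, norm_mm g⟩, fun z => ?_⟩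
  have hmm : ∀ g : G, ‖mm g‖ ≤ 1 := fun g => (norm_mm g).le
  refine ⟨∑' g, z g • mm g, norm_tsum_smul_le_of_norm_le_one z hmm, fun b ⟨k, hb⟩ => ?_⟩
  change _ = pairing (coboundary b) (abs_coboundary_le hb) _
  rw [ContinuousLinearMap.map_tsum _ (summable_smul_of_norm_le_one z hmm)]
  simp only [map_smul, pairing_coboundary_mm hb, smul_eq_mul]

end
end

section
/- Let G be a group. For all g, h, k ∈ G, the element m₂(h,k) − m₂(gh,k) + m₂(g,hk) − m₂(g,h) of ℓ¹(G×G) belongs to the closure of the ℝ-linear span of B₂. (Hence the map (g,h) ↦ class of m₂(g,h) in the quotient of ℓ¹(G×G) by this closed subspace is a bounded 2-cocycle m̄₂ of G with values in the reduced ℓ¹-homology H̄₂^{ℓ¹}(G,ℝ), representing the class g₂.) -/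
noncomputable section

open scoped ENNReal

/-- `m₂(g,h) = δ_{(g,h)} − m(g) + m(gh) − m(h) ∈ ℓ¹(G×G)`. -/
def m2 {G : Type*} [Group G] (g h : G) : lp (fun _ : G × G => ℝ) 1 :=
  dirac (g, h) - mm g + mm (g * h) - mm h

/-- The set of boundary elements of `ℓ¹(G×G)`. -/
def B2 (G : Type*) [Group G] : Set (lp (fun _ : G × G => ℝ) 1) :=
  {x | ∃ a b k : G, x = dirac (b, k) - dirac (a * b, k) + dirac (a, b * k) - dirac (a, b)}

/-
The `m` part of `m₂` is the coboundary `(g, h) ↦ -m(g) + m(gh) - m(h)` of the 1-cochain `m`, and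
a coboundary of a coboundary vanishes. So the coboundary of `m₂` equals that of the Dirac cochain,
which is the element of `B₂` indexed by `(g, h, k)`.
-/

theorem m2_coboundary_eq_dirac_coboundary {G : Type*} [Group G] (g h k : G) :
    m2 h k - m2 (g * h) k + m2 g (h * k) - m2 g h =
      dirac (h, k) - dirac (g * h, k) + dirac (g, h * k) - dirac (g, h) := by
  simp only [m2, mul_assoc]
  abel

/-- the inhomogeneous coboundary of `m₂` takes values in the closure of the
span of the boundaries `B₂`; hence `m₂` induces a bounded 2-cocycle with values in the
reduced ℓ¹-homology `H̄₂^{ℓ¹}(G,ℝ)`, representing the class `g₂`. -/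
theorem stmt_10 {G : Type*} [Group G] (g h k : G) :
    m2 h k - m2 (g * h) k + m2 g (h * k) - m2 g h ∈
      closure ((Submodule.span ℝ (B2 G) : Submodule ℝ _) :
        Set (lp (fun _ : G × G => ℝ) 1)) := by
  rw [m2_coboundary_eq_dirac_coboundary]
  exact subset_closure (Submodule.subset_span ⟨g, h, k, rfl⟩)
end
end

section
/- Let G and Π be groups, (Ψ, f) an abstract kernel for Π and G, and c a homogeneous bounded 2-cocycle on G. Then for all α, β, γ, ζ ∈ Π: e_c(β,γ,ζ) − e_c(αβ,γ,ζ) + e_c(α,βγ,ζ) − e_c(α,β,γζ) + e_c(α,β,γ) = e_c(β,γ,ζ) − e_{c^α}(β,γ,ζ), where c^α(g,h) := c(Ψ(α)(g), Ψ(α)(h)). (This is the coboundary formula d(c_{x,Ψ̄})(α,β,γ,ζ) = c_{x,Ψ̄}(β,γ,ζ) − c_{Ψ(α)_b(x),Ψ̄}(β,γ,ζ) for the composition cochain.) -/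
/-- The composition cochain `e_c(α,β,γ) = c(Ψ(α)(f(β,γ)), f(α,βγ)) − c(f(α,β), f(αβ,γ))`
associated to an abstract kernel `(Ψ, f)` and a 2-cochain `c` on `G`. -/
def eCochain {G P : Type*} [Group G] [Group P] (Ψ : P → G ≃* G) (f : P → P → G)
    (c : G → G → ℝ) (α β γ : P) : ℝ :=
  c (Ψ α (f β γ)) (f α (β * γ)) - c (f α β) (f (α * β) γ)

open Subgroup

lemma eq_zero_of_bounded_of_add_const {u : ℕ → ℝ} {t K : ℝ} (h0 : u 0 = 0)
    (hsucc : ∀ n, u (n + 1) = u n + t) (hb : ∀ n, |u n| ≤ K) : t = 0 := by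
  have hlin : ∀ n : ℕ, u n = n * t := by
    intro n
    induction n with
    | zero => simp [h0]
    | succ n ih => rw [hsucc, ih]; push_cast; ring
  by_contra ht
  obtain ⟨n, hn⟩ := exists_nat_gt (K / |t|)
  have hK := hb n
  rw [hlin, abs_mul, Nat.abs_cast] at hK
  have := (div_lt_iff₀ (abs_pos.mpr ht)).mp hn
  linarith

/-- Agrees with `c` on arbitrary representatives only when `c` is invariant under central
translations, see `IsBounded2Cocycle.quotientCenterCochain_mk`. -/
noncomputable def quotientCenterCochain {G : Type*} [Group G] (c : G → G → ℝ) :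
    G ⧸ center G → G ⧸ center G → ℝ :=
  fun x y => c x.out y.out

namespace IsBounded2Cocycle

variable {G : Type*} [Group G] {c : G → G → ℝ} {z : G}
  (hc : IsBounded2Cocycle c) (hhom : IsHomogeneous2Cocycle c)
include hc hhom

lemma apply_eq_apply_conj (a x : G) : c a x = c (a * x * a⁻¹) a := by
  obtain ⟨⟨k, hk⟩, hco, hr1, hl1⟩ := hc
  set u : G → ℝ := fun x => c a x - c (a * x * a⁻¹) a with hu
  have hmul : ∀ x y, u (x * y) = u x + u y - (c x y - c (a * x * a⁻¹) (a * y * a⁻¹)) := by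
    intro x y
    have h1 := hco a x y
    have h2 := hco (a * x * a⁻¹) a y
    have h3 := hco (a * x * a⁻¹) (a * y * a⁻¹) a
    rw [show a * x * a⁻¹ * a = a * x by group] at h2
    rw [show a * x * a⁻¹ * (a * y * a⁻¹) = a * (x * y) * a⁻¹ by group,
      show a * y * a⁻¹ * a = a * y by group] at h3
    simp only [hu]
    linarith
  have hpow : ∀ n : ℕ, u (x ^ (n + 1)) = u (x ^ n) + u x := by
    intro n
    have h1 := hhom x n 1
    have h2 := hhom (a * x * a⁻¹) n 1
    rw [conj_pow, pow_one] at h2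
    rw [pow_one] at h1
    rw [pow_succ, hmul, h1, h2]
    ring
  have := eq_zero_of_bounded_of_add_const (u := fun n => u (x ^ n)) (K := 2 * k)
    (by simp [hu, hr1, hl1]) hpow
    (fun n => (abs_sub _ _).trans (by linarith [hk a (x ^ n), hk (a * x ^ n * a⁻¹) a]))
  simp only [hu] at this
  linarith

lemma apply_comm_of_mem_center (hz : z ∈ center G) (x : G) : c x z = c z x := by
  rw [hc.apply_eq_apply_conj hhom x z, mem_center_iff.mp hz x, mul_inv_cancel_right]

lemma apply_of_mem_center_right (hz : z ∈ center G) (x : G) : c x z = 0 := by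
  obtain ⟨⟨k, hk⟩, hco, hr1, -⟩ := id hc
  refine eq_zero_of_bounded_of_add_const (u := fun n => c (x ^ n) (z ^ n)) (K := k)
    (by simpa using hr1 1) (fun n => ?_) (fun n => hk _ _)
  have hzn : z ^ n ∈ center G := pow_mem hz n
  have e1 := hco (x ^ n) (z ^ n) (x * z)
  have e2 := hco (x ^ n) x (z ^ (n + 1))
  have e3 := hco x z (z ^ n)
  have hxz : x ^ n * z ^ n = (x * z) ^ n :=
    (Commute.mul_pow (mem_center_iff.mp hz x) n).symm
  rw [show z ^ n * (x * z) = x * z ^ (n + 1) by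
      rw [← mul_assoc, ← mem_center_iff.mp hzn x, mul_assoc, ← pow_succ], hxz,
    show c ((x * z) ^ n) (x * z) = 0 by simpa using hhom (x * z) n 1] at e1
  rw [← pow_succ, show c (x ^ n) x = 0 by simpa using hhom x n 1] at e2
  rw [← pow_succ', show c z (z ^ n) = 0 by simpa using hhom z 1 n] at e3
  have hsymm := hc.apply_comm_of_mem_center hhom hzn (x * z)
  linarith

lemma apply_of_mem_center_left (hz : z ∈ center G) (x : G) : c z x = 0 := by
  rw [← hc.apply_comm_of_mem_center hhom hz, hc.apply_of_mem_center_right hhom hz]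

lemma apply_mul_of_mem_center_left (hz : z ∈ center G) (x y : G) : c (x * z) y = c x y := by
  have := hc.2.1 z x y
  rw [← mem_center_iff.mp hz x, hc.apply_of_mem_center_left hhom hz,
    hc.apply_of_mem_center_left hhom hz] at this
  linarith

lemma apply_mul_of_mem_center_right (hz : z ∈ center G) (x y : G) : c x (y * z) = c x y := by
  have := hc.2.1 x y z
  rw [hc.apply_of_mem_center_right hhom hz, hc.apply_of_mem_center_right hhom hz] at this
  linarith

lemma quotientCenterCochain_mk (a b : G) :
    quotientCenterCochain c (a : G ⧸ center G) b = c a b := by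
  obtain ⟨⟨z, hz⟩, hza⟩ := QuotientGroup.mk_out_eq_mul (center G) a
  obtain ⟨⟨w, hw⟩, hwb⟩ := QuotientGroup.mk_out_eq_mul (center G) b
  rw [quotientCenterCochain, hza, hwb, hc.apply_mul_of_mem_center_left hhom hz,
    hc.apply_mul_of_mem_center_right hhom hw]

lemma quotientCenterCochain_cocycle (x y w : G ⧸ center G) :
    quotientCenterCochain c y w - quotientCenterCochain c (x * y) w
      + quotientCenterCochain c x (y * w) - quotientCenterCochain c x y = 0 := by
  induction x using QuotientGroup.induction_on
  induction y using QuotientGroup.induction_on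
  induction w using QuotientGroup.induction_on
  simp only [← QuotientGroup.mk_mul, hc.quotientCenterCochain_mk hhom]
  exact hc.2.1 _ _ _

lemma quotientCenterCochain_eq_conj (a x : G ⧸ center G) :
    quotientCenterCochain c a x = quotientCenterCochain c (a * x * a⁻¹) a := by
  induction a using QuotientGroup.induction_on
  induction x using QuotientGroup.induction_on
  simp only [← QuotientGroup.mk_inv, ← QuotientGroup.mk_mul, hc.quotientCenterCochain_mk hhom]
  exact hc.apply_eq_apply_conj hhom _ _

end IsBounded2Cocycle

lemma mk_eq_mk_of_conj_eq {G : Type*} [Group G] {x y : G}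
    (h : ∀ g, x * g * x⁻¹ = y * g * y⁻¹) : (x : G ⧸ center G) = y := by
  rw [QuotientGroup.eq, mem_center_iff]
  intro g
  calc g * (x⁻¹ * y) = x⁻¹ * (x * g * x⁻¹) * y := by group
    _ = x⁻¹ * (y * g * y⁻¹) * y := by rw [h]
    _ = x⁻¹ * y * g := by group

lemma mk_apply_mul_eq_mk_mul {G P : Type*} [Group G] [Group P] {Ψ : P → G ≃* G}
    {f : P → P → G}
    (hkernel : ∀ (α β : P) (g : G), Ψ α (Ψ β g) = f α β * Ψ (α * β) g * (f α β)⁻¹)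
    (α β γ : P) :
    (Ψ α (f β γ) : G ⧸ center G) * f α (β * γ) = f α β * f (α * β) γ := by
  rw [← QuotientGroup.mk_mul, ← QuotientGroup.mk_mul]
  refine mk_eq_mk_of_conj_eq fun g => ?_
  obtain ⟨g, rfl⟩ := (Ψ (α * β * γ)).surjective g
  calc Ψ α (f β γ) * f α (β * γ) * Ψ (α * β * γ) g * (Ψ α (f β γ) * f α (β * γ))⁻¹
      = Ψ α (Ψ β (Ψ γ g)) := by
        rw [hkernel β γ, map_mul, map_mul, map_inv, hkernel α, mul_assoc α]
        group
    _ = f α β * f (α * β) γ * Ψ (α * β * γ) g * (f α β * f (α * β) γ)⁻¹ := by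
        rw [hkernel α β, hkernel (α * β) γ]
        group

lemma cocycle_composition_identity {H : Type*} [Group H] {c : H → H → ℝ}
    (hco : ∀ g h k : H, c h k - c (g * h) k + c g (h * k) - c g h = 0)
    (hconj : ∀ a x : H, c a x = c (a * x * a⁻¹) a)
    {A B D E K F p q r s : H} (hp : p * D = A * B) (hs : s * E = B * K) (hr : r * F = D * K)
    (hq : q * F = A * E) :
    -(c s E - c B K) + (c r F - c D K) - (c q F - c A E) + (c p D - c A B)
      = c p r - c (A * s * A⁻¹) q := by
  have hpr : p * r = A * s * A⁻¹ * q := by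
    rw [eq_mul_inv_of_mul_eq hp, eq_mul_inv_of_mul_eq hr, eq_mul_inv_of_mul_eq hs,
      eq_mul_inv_of_mul_eq hq]
    group
  have h1 := hco p D K
  have h2 := hco p r F
  have h3 := hco A B K
  have h4 := hco A s E
  have h5 := hco (A * s * A⁻¹) q F
  have h6 := hco (A * s * A⁻¹) A E
  rw [hp, ← hr] at h1
  rw [hpr] at h2
  rw [← hs] at h3
  rw [hq] at h5
  rw [inv_mul_cancel_right] at h6
  linarith [hconj A s]

/-- the coboundary formula for the composition cochain
`d(c_{x,Ψ̄})(α,β,γ,ζ) = c_{x,Ψ̄}(β,γ,ζ) − c_{Ψ(α)_b(x),Ψ̄}(β,γ,ζ)`. -/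
theorem stmt_16 {G P : Type*} [Group G] [Group P]
    (Ψ : P → G ≃* G) (f : P → P → G)
    (hkernel : ∀ (α β : P) (g : G),
      Ψ α (Ψ β g) = f α β * Ψ (α * β) g * (f α β)⁻¹)
    (c : G → G → ℝ) (hc : IsBounded2Cocycle c) (hhom : IsHomogeneous2Cocycle c) :
    ∀ α β γ ζ : P,
      eCochain Ψ f c β γ ζ - eCochain Ψ f c (α * β) γ ζ + eCochain Ψ f c α (β * γ) ζ
        - eCochain Ψ f c α β (γ * ζ) + eCochain Ψ f c α β γ =
      eCochain Ψ f c β γ ζ -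
        eCochain Ψ f (fun g h => c (Ψ α g) (Ψ α h)) β γ ζ := by
  intro α β γ ζ
  have hr := mk_apply_mul_eq_mk_mul hkernel α (β * γ) ζ
  have hq := mk_apply_mul_eq_mk_mul hkernel α β (γ * ζ)
  rw [← mul_assoc α β γ] at hr
  rw [← mul_assoc β γ ζ] at hq
  have key := cocycle_composition_identity (hc.quotientCenterCochain_cocycle hhom)
    (hc.quotientCenterCochain_eq_conj hhom) (mk_apply_mul_eq_mk_mul hkernel α β γ)
    (mk_apply_mul_eq_mk_mul hkernel (α * β) γ ζ) hr hq
  simp only [← QuotientGroup.mk_inv, ← QuotientGroup.mk_mul,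
    hc.quotientCenterCochain_mk hhom] at key
  simp only [eCochain, hkernel α β, ← mul_assoc α β γ, ← mul_assoc β γ ζ]
  linear_combination key
end
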